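/- arXiv:2505.19340 — 2 statements merged into one kernel-verified Lean document; each statement's English description precedes it below -/
import Mathlib

section
/- For every integer q ≥ 6, the graph C_{q−1}^+ obtained from the cycle C_{q−1} by attaching a single pendant leaf satisfies μ_t(C_{q−1}^+) = 1. Consequently, for every q ≥ 6 there exists a connected graph of order q whose total mutual-visibility number is 1. -/
open SimpleGraph

/-- `u` and `v` are `X`-visible in `G`: there is a shortest `u,v`-walk whose
vertices meet `X` only possibly in `u` and `v`. -/
def IsMVisible {V : Type*} (G : SimpleGraph V) (X : Set V) (u v : V) : Prop :=
  ∃ P : G.Walk u v, P.length = G.dist u v ∧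
    ∀ w ∈ P.support, w ∈ X → w = u ∨ w = v

/-- mutual-visibility set -/
def IsMVSet {V : Type*} (G : SimpleGraph V) (X : Set V) : Prop :=
  ∀ u ∈ X, ∀ v ∈ X, IsMVisible G X u v

/-- outer mutual-visibility set -/
def IsOuterMVSet {V : Type*} (G : SimpleGraph V) (X : Set V) : Prop :=
  ∀ u ∈ X, ∀ v : V, IsMVisible G X u v

/-- dual mutual-visibility set -/
def IsDualMVSet {V : Type*} (G : SimpleGraph V) (X : Set V) : Prop :=
  (∀ u ∈ X, ∀ v ∈ X, IsMVisible G X u v) ∧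
  (∀ u ∉ X, ∀ v ∉ X, IsMVisible G X u v)

/-- total mutual-visibility set -/
def IsTotalMVSet {V : Type*} (G : SimpleGraph V) (X : Set V) : Prop :=
  ∀ u v : V, IsMVisible G X u v

/-- the mutual-visibility number μ(G) -/
noncomputable def mu {V : Type*} (G : SimpleGraph V) : ℕ :=
  sSup {n | ∃ X : Set V, IsMVSet G X ∧ X.ncard = n}

/-- the outer mutual-visibility number μₒ(G) -/
noncomputable def muO {V : Type*} (G : SimpleGraph V) : ℕ :=
  sSup {n | ∃ X : Set V, IsOuterMVSet G X ∧ X.ncard = n}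

/-- the dual mutual-visibility number μ_d(G) -/
noncomputable def muD {V : Type*} (G : SimpleGraph V) : ℕ :=
  sSup {n | ∃ X : Set V, IsDualMVSet G X ∧ X.ncard = n}

/-- the total mutual-visibility number μ_t(G) -/
noncomputable def muT {V : Type*} (G : SimpleGraph V) : ℕ :=
  sSup {n | ∃ X : Set V, IsTotalMVSet G X ∧ X.ncard = n}

/-- relation underlying `C_n^+`: a cycle `C_n` (on `some`-vertices) with a pendant
leaf `none` attached to the cycle vertex `0`. -/
def CPrel (n : ℕ) : Option (Fin n) → Option (Fin n) → Prop
  | some i, some j => (SimpleGraph.cycleGraph n).Adj i j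
  | none, some i => (i : ℕ) = 0
  | some i, none => (i : ℕ) = 0
  | none, none => False

/-- the graph `C_n^+` obtained from the cycle `C_n` by attaching one pendant leaf -/
def CPlus (n : ℕ) : SimpleGraph (Option (Fin n)) := SimpleGraph.fromRel (CPrel n)

/-!
A pendant leaf is never an interior vertex of a shortest path: its two path neighbours would
coincide, and the detour through the leaf could be cut out. Hence the leaf alone is a total
mutual-visibility set. Conversely, on a cycle with at least five vertices, `i - 1` and `i + 1` are
non-adjacent with `i` as their only common neighbour (the leaf hangs at a single cycle vertex), so
every shortest `(i - 1),(i + 1)`-path runs through `i`, and no cycle vertex lies in a total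
mutual-visibility set.
-/

namespace SimpleGraph

variable {V : Type*} {G : SimpleGraph V} {u v w : V}

theorem Walk.eq_or_eq_of_mem_support_of_length_eq_dist (hw : (G.neighborSet w).Subsingleton)
    {P : G.Walk u v} (hP : P.length = G.dist u v) (hmem : w ∈ P.support) : w = u ∨ w = v := by
  by_contra! hne
  obtain ⟨q, r, rfl⟩ := Walk.mem_support_iff_exists_append.mp hmem
  cases hq : q.reverse with
  | nil => exact hne.1 rfl
  | cons ha q' =>
    cases r with
    | nil => exact hne.2 rfl
    | cons hb r' =>
      obtain rfl := hw ha hb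
      have hq_len : q.length = q'.length + 1 := by rw [← length_reverse, hq, length_cons]
      have := G.dist_le (q'.reverse.append r')
      simp only [length_append, length_cons, length_reverse] at hP this
      omega

end SimpleGraph

section TotalMutualVisibility

variable {V : Type*} {G : SimpleGraph V} {u v w : V}

theorem isTotalMVSet_singleton (hG : G.Connected) (hw : (G.neighborSet w).Subsingleton) :
    IsTotalMVSet G {w} := by
  intro u v
  obtain ⟨P, hP⟩ := hG.exists_walk_length_eq_dist u v
  refine ⟨P, hP, fun x hx hxw => ?_⟩
  rw [Set.mem_singleton_iff] at hxw
  subst hxw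
  exact Walk.eq_or_eq_of_mem_support_of_length_eq_dist hw hP hx

theorem IsTotalMVSet.notMem_of_commonNeighbors_eq_singleton {X : Set V}
    (hX : IsTotalMVSet G X) (huv : u ≠ v) (hadj : ¬G.Adj u v)
    (hw : G.commonNeighbors u v = {w}) : w ∉ X := by
  intro hwX
  obtain ⟨huw, hvw⟩ := G.mem_commonNeighbors.mp (hw ▸ Set.mem_singleton w)
  obtain ⟨P, hP, hvis⟩ := hX u v
  have hdist : G.dist u v ≤ 2 := G.dist_le (.cons huw (.cons hvw.symm .nil))
  match P, hP with
  | .nil, _ => exact huv rfl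
  | .cons h .nil, _ => exact hadj h
  | .cons (v := x) h₁ (.cons h₂ .nil), _ =>
    have hx : x ∈ G.commonNeighbors u v := G.mem_commonNeighbors.mpr ⟨h₁, h₂.symm⟩
    rw [hw, Set.mem_singleton_iff] at hx
    subst hx
    rcases hvis x (by simp) hwX with rfl | rfl
    · exact G.irrefl h₁
    · exact G.irrefl h₂
  | .cons _ (.cons _ (.cons _ _)), hP =>
    simp only [Walk.length_cons] at hP
    omega

theorem muT_eq_one_of_forall_subset_singleton (hw : IsTotalMVSet G {w})
    (hmax : ∀ X, IsTotalMVSet G X → X ⊆ {w}) : muT G = 1 := by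
  refine IsGreatest.csSup_eq ⟨⟨{w}, hw, Set.ncard_singleton w⟩, ?_⟩
  rintro _ ⟨X, hX, rfl⟩
  simpa using Set.ncard_le_ncard (hmax X hX)

end TotalMutualVisibility

open scoped Fin.CommRing

theorem Fin.natCast_ne_zero_of_pos_of_lt {n k : ℕ} [NeZero n] (hk : 0 < k) (hkn : k < n) :
    (k : Fin n) ≠ 0 := by
  rw [Ne, CharP.cast_eq_zero_iff (Fin n) n]
  exact fun h => (Nat.le_of_dvd hk h).not_gt hkn

theorem Fin.sub_one_ne_add_one {n : ℕ} [NeZero n] (hn : 3 ≤ n) (i : Fin n) : i - 1 ≠ i + 1 :=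
  fun h => Fin.natCast_ne_zero_of_pos_of_lt (n := n) (k := 2) two_pos (by omega)
    (by push_cast; linear_combination -h)

namespace SimpleGraph

theorem cycleGraph_not_adj_sub_one_add_one {n : ℕ} [NeZero n] (hn : 4 ≤ n) (i : Fin n) :
    ¬(cycleGraph n).Adj (i - 1) (i + 1) := by
  obtain ⟨m, rfl⟩ : ∃ m, n = m + 2 := ⟨n - 2, by omega⟩
  rw [← mem_neighborSet, cycleGraph_neighborSet, Set.mem_insert_iff, Set.mem_singleton_iff]
  rintro (h | h)
  · exact Fin.natCast_ne_zero_of_pos_of_lt (n := m + 2) (k := 3) three_pos (by omega)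
      (by push_cast; linear_combination h)
  · exact one_ne_zero (by linear_combination h : (1 : Fin (m + 2)) = 0)

theorem cycleGraph_commonNeighbors_sub_one_add_one {n : ℕ} [NeZero n] (hn : 5 ≤ n) (i : Fin n) :
    (cycleGraph n).commonNeighbors (i - 1) (i + 1) = {i} := by
  obtain ⟨m, rfl⟩ : ∃ m, n = m + 2 := ⟨n - 2, by omega⟩
  have h4 : ((4 : ℕ) : Fin (m + 2)) ≠ 0 := Fin.natCast_ne_zero_of_pos_of_lt four_pos (by omega)
  ext x
  simp only [commonNeighbors_eq, cycleGraph_neighborSet, Set.mem_inter_iff, Set.mem_insert_iff,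
    Set.mem_singleton_iff]
  constructor
  · rintro ⟨hx | hx, hx' | hx'⟩
    · exact absurd (by linear_combination hx' - hx) (Fin.sub_one_ne_add_one (by omega) i)
    · exact absurd (by push_cast; linear_combination hx - hx') h4
    · linear_combination hx
    · linear_combination hx
  · rintro rfl
    exact ⟨Or.inr (by ring), Or.inl (by ring)⟩

end SimpleGraph

namespace CPlus

variable {n : ℕ}

theorem adj_some_some {i j : Fin n} :
    (CPlus n).Adj (some i) (some j) ↔ (cycleGraph n).Adj i j := by
  simp only [CPlus, fromRel_adj, CPrel, ne_eq, Option.some.injEq, adj_comm (cycleGraph n) j i,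
    or_self, and_iff_right_iff_imp]
  exact Adj.ne

theorem adj_none_some {i : Fin n} : (CPlus n).Adj none (some i) ↔ (i : ℕ) = 0 := by
  simp [CPlus, CPrel]

theorem neighborSet_none_subsingleton : ((CPlus n).neighborSet none).Subsingleton := by
  rintro (_ | i) hi (_ | j) hj
  · rfl
  · exact absurd hi (CPlus n).irrefl
  · exact absurd hj (CPlus n).irrefl
  · rw [mem_neighborSet, adj_none_some] at hi hj
    exact congrArg some (Fin.ext (hi.trans hj.symm))

def ofCycle (n : ℕ) : cycleGraph n →g CPlus n where
  toFun := some
  map_rel' := adj_some_some.mpr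

theorem connected (n : ℕ) : (CPlus n).Connected := by
  have hreach (u : Option (Fin n)) : (CPlus n).Reachable u none := by
    rcases u with _ | i
    · rfl
    · have h0 : (CPlus n).Adj (some ⟨0, i.pos⟩) none := (adj_none_some.mpr rfl).symm
      exact (cycleGraph_preconnected i ⟨0, i.pos⟩).map (ofCycle n) |>.trans h0.reachable
  exact ⟨fun u v => (hreach u).trans (hreach v).symm⟩

theorem commonNeighbors_some_some {i j : Fin n} (hij : i ≠ j) :
    (CPlus n).commonNeighbors (some i) (some j) = some '' (cycleGraph n).commonNeighbors i j := by
  ext (_ | x)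
  · simp only [mem_commonNeighbors, adj_comm _ _ none, adj_none_some, Set.mem_image, reduceCtorEq,
      and_false, exists_false, iff_false]
    exact fun ⟨hi, hj⟩ => hij (Fin.ext (hi.trans hj.symm))
  · simp [mem_commonNeighbors, adj_some_some]

theorem notMem_of_isTotalMVSet (hn : 5 ≤ n) {X : Set (Option (Fin n))}
    (hX : IsTotalMVSet (CPlus n) X) (i : Fin n) : some i ∉ X := by
  have : NeZero n := ⟨by omega⟩
  have hne := Fin.sub_one_ne_add_one (by omega) i
  refine hX.notMem_of_commonNeighbors_eq_singleton (Option.some_injective _ |>.ne hne)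
    (adj_some_some.not.mpr (cycleGraph_not_adj_sub_one_add_one (by omega) i)) ?_
  rw [commonNeighbors_some_some hne, cycleGraph_commonNeighbors_sub_one_add_one hn i,
    Set.image_singleton]

theorem muT_eq_one (hn : 5 ≤ n) : muT (CPlus n) = 1 := by
  refine muT_eq_one_of_forall_subset_singleton
    (isTotalMVSet_singleton (connected n) neighborSet_none_subsingleton) fun X hX => ?_
  rintro (_ | i) hi
  · rfl
  · exact absurd hi (notMem_of_isTotalMVSet hn hX i)

end CPlus

theorem stmt_16 (q : ℕ) (hq : 6 ≤ q) :
    muT (CPlus (q - 1)) = 1 ∧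
    ∃ (V : Type) (G : SimpleGraph V), Finite V ∧ Nat.card V = q ∧
      G.Connected ∧ muT G = 1 := by
  have hμ : muT (CPlus (q - 1)) = 1 := CPlus.muT_eq_one (by omega)
  refine ⟨hμ, _, CPlus (q - 1), inferInstance, ?_, CPlus.connected _, hμ⟩
  simp only [Nat.card_eq_fintype_card, Fintype.card_option, Fintype.card_fin]
  omega
end

section
/- For every integer k ≥ 5, let F_k be the graph with vertex set {z} ∪ {x_1,…,x_k} ∪ {y_1,…,y_{2k}} and edges z x_i (i ∈ [k]), x_i y_{2i−1}, x_i y_{2i} (i ∈ [k]), and y_j y_{j+1} (j ∈ [2k−1]). Then μ_t(F_k) = 2 and μ_d(F_k) = 3. -/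
open SimpleGraph

/-- relation underlying the graph `F_k`; with `z = none`,
`x i = some (Sum.inl i)` (i ∈ [k], 0-indexed) and `y j = some (Sum.inr j)`
(j ∈ [2k], 0-indexed), the edges are exactly `z x_i`, `x_i y_{2i}`, `x_i y_{2i+1}`
and `y_j y_{j+1}`. -/
def Frel (k : ℕ) : Option (Fin k ⊕ Fin (2 * k)) → Option (Fin k ⊕ Fin (2 * k)) → Prop
  | none, some (Sum.inl _) => True
  | some (Sum.inl i), some (Sum.inr j) => (j : ℕ) = 2 * (i : ℕ) ∨ (j : ℕ) = 2 * (i : ℕ) + 1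
  | some (Sum.inr j), some (Sum.inr j') => (j' : ℕ) = (j : ℕ) + 1
  | _, _ => False

/-- the graph `F_k` from the paper -/
def Fgraph (k : ℕ) : SimpleGraph (Option (Fin k ⊕ Fin (2 * k))) := SimpleGraph.fromRel (Frel k)

/-!
Distances in `F_k` have an explicit closed form `fdist`: it changes by at most one along an edge
and is attained by explicit walks. A shortest `u,v`-walk leaves `u` through a neighbour `w` with
`d(w,v) = d(u,v) - 1`, so `u` and `v` are not `X`-visible once all such neighbours lie in `X`.
In a total set this excludes `z` (between two `x`'s), every `x_a` (between `z` and `y_{2a}`) and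
every inner `y_m` (between `y_{m-1}` and `y_{m+1}`), while the two ends `y_0`, `y_{2k-1}` of the
path never occur inside the walks realising `fdist`.
In a dual set, `z` is excluded because two of `x_0, x_1, x_2` lie on the same side of `X`; an `x_a`
in `X` forces `y_{2a}, y_{2a+1}` into `X`, and these two block every other vertex; without
`x`'s, an inner `y_m` in `X` has exactly one of `y_{m-1}, y_{m+1}` in `X`, which again
leaves a blocked pair. Finally `{x_0, y_0, y_1}`
is a dual mutual-visibility set.
-/

section Visibility

variable {V : Type*} {G : SimpleGraph V} {X : Set V} {u v : V}

lemma isMVisible_self (u : V) : IsMVisible G X u u :=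
  ⟨.nil, by simp, by simp⟩

lemma isMVisible_of_adj (h : G.Adj u v) : IsMVisible G X u v := by
  refine ⟨.cons h .nil, by simp [SimpleGraph.dist_eq_one_iff_adj.2 h], ?_⟩
  intro w hw _
  simpa using hw

lemma IsMVisible.exists_adj_notMem (h : IsMVisible G X u v) (huv : 2 ≤ G.dist u v) :
    ∃ w, G.Adj u w ∧ G.dist w v + 1 = G.dist u v ∧ w ∉ X := by
  obtain ⟨p, hp, havoid⟩ := h
  cases p with
  | nil => simp at huv
  | @cons _ w _ hadj q =>
    obtain ⟨q', hq'⟩ := q.reachable.exists_walk_length_eq_dist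
    have hle : G.dist u v ≤ G.dist w v + 1 := by
      simpa [hq'] using SimpleGraph.dist_le (.cons hadj q')
    have hge : G.dist w v ≤ q.length := SimpleGraph.dist_le q
    refine ⟨w, hadj, by simp at hp; omega, fun hw => ?_⟩
    rcases havoid w (by simp) hw with rfl | rfl
    · exact G.loopless.irrefl _ hadj
    · have := SimpleGraph.dist_le (.cons hadj .nil : G.Walk u w)
      simp at this; omega

end Visibility

namespace Fgraph

variable {k : ℕ}

abbrev V (k : ℕ) := Option (Fin k ⊕ Fin (2 * k))
abbrev z : V k := none
abbrev x (a : Fin k) : V k := some (.inl a)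
abbrev y (j : Fin (2 * k)) : V k := some (.inr j)

@[simp] lemma adj_z_x (a : Fin k) : (Fgraph k).Adj z (x a) := by
  simp [Fgraph, Frel]

@[simp] lemma adj_x_z (a : Fin k) : (Fgraph k).Adj (x a) z := by
  simp [Fgraph, Frel]

@[simp] lemma not_adj_z_y (j : Fin (2 * k)) : ¬ (Fgraph k).Adj z (y j) := by
  simp [Fgraph, Frel]

@[simp] lemma not_adj_y_z (j : Fin (2 * k)) : ¬ (Fgraph k).Adj (y j) z := by
  simp [Fgraph, Frel]

@[simp] lemma not_adj_x_x (a b : Fin k) : ¬ (Fgraph k).Adj (x a) (x b) := by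
  simp [Fgraph, Frel]

@[simp] lemma adj_x_y_iff (a : Fin k) (j : Fin (2 * k)) :
    (Fgraph k).Adj (x a) (y j) ↔ (j : ℕ) / 2 = a := by
  simp [Fgraph, Frel]
  omega

@[simp] lemma adj_y_x_iff (a : Fin k) (j : Fin (2 * k)) :
    (Fgraph k).Adj (y j) (x a) ↔ (j : ℕ) / 2 = a := by
  rw [SimpleGraph.adj_comm, adj_x_y_iff]

@[simp] lemma adj_y_y_iff (i j : Fin (2 * k)) :
    (Fgraph k).Adj (y i) (y j) ↔ (j : ℕ) = i + 1 ∨ (i : ℕ) = j + 1 := by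
  simp only [Fgraph, fromRel_adj, Frel, ne_eq, Option.some.injEq, Sum.inr.injEq]
  constructor
  · exact fun h => h.2
  · exact fun h => ⟨fun hij => by subst hij; omega, h⟩

lemma y_eq_y_iff {i j : Fin (2 * k)} : (y i : V k) = y j ↔ (i : ℕ) = j := by
  simp [Fin.ext_iff]

lemma x_eq_x_iff {a b : Fin k} : (x a : V k) = x b ↔ (a : ℕ) = b := by
  simp [Fin.ext_iff]

def xyDist (a : Fin k) (j : Fin (2 * k)) : ℕ :=
  if (j : ℕ) / 2 = a then 1 else if (j : ℕ) + 1 = 2 * a ∨ (j : ℕ) = 2 * a + 2 then 2 else 3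

/-- The distance in `F_k` (`dist_eq_fdist`): two `y`'s are joined along the path or by
`y x z x y`. -/
def fdist : V k → V k → ℕ
  | none, none => 0
  | none, some (.inl _) | some (.inl _), none => 1
  | none, some (.inr _) | some (.inr _), none => 2
  | some (.inl a), some (.inl b) => if a = b then 0 else 2
  | some (.inl a), some (.inr j) | some (.inr j), some (.inl a) => xyDist a j
  | some (.inr i), some (.inr j) => min ((i : ℕ) - j + (j - i)) 4

@[simp] lemma fdist_self (u : V k) : fdist u u = 0 := by
  rcases u with _ | (a | j) <;> simp [fdist]

lemma fdist_comm (u v : V k) : fdist u v = fdist v u := by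
  rcases u with _ | (a | i) <;> rcases v with _ | (b | j) <;> simp [fdist, eq_comm]; omega

lemma fdist_le_of_adj {u w : V k} (h : (Fgraph k).Adj u w) (v : V k) :
    fdist u v ≤ fdist w v + 1 := by
  rcases u with _ | (a | i) <;> rcases w with _ | (b | m) <;> simp at h <;>
    rcases v with _ | (c | j) <;> simp only [fdist, xyDist] <;>
    first | omega | (split_ifs <;> simp_all [Fin.ext_iff] <;> omega)

lemma fdist_le_length {u v : V k} (p : (Fgraph k).Walk u v) : fdist u v ≤ p.length := by
  induction p with
  | nil => simp
  | cons h _ ih => simpa using (fdist_le_of_adj h _).trans (Nat.add_le_add_right ih 1)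

/-- Over-approximates the set of inner vertices of the shortest `u,v`-walks built below. -/
def Between (u v w : V k) : Prop :=
  w = z ∨
  (∃ c j, w = x c ∧ (u = y j ∨ v = y j) ∧ (j : ℕ) / 2 = c) ∨
  (∃ m i j, w = y m ∧ (u = y i ∧ v = y j ∨ u = y j ∧ v = y i) ∧ (i : ℕ) < m ∧ (m : ℕ) < j) ∨
  (∃ m a j, w = y m ∧ (u = x a ∧ v = y j ∨ u = y j ∧ v = x a) ∧
    ((j : ℕ) + 1 = 2 * a ∧ (m : ℕ) = 2 * a ∨ (j : ℕ) = 2 * a + 2 ∧ (m : ℕ) = 2 * a + 1))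

lemma Between.symm {u v w : V k} (h : Between u v w) : Between v u w := by
  unfold Between at *
  rcases h with h | ⟨c, j, hw, hj, hc⟩ | ⟨m, i, j, hw, hij, hm⟩ | ⟨m, a, j, hw, haj, hm⟩
  · exact .inl h
  · exact .inr <| .inl ⟨c, j, hw, hj.symm, hc⟩
  · exact .inr <| .inr <| .inl ⟨m, i, j, hw, hij.symm.imp And.symm And.symm, hm⟩
  · exact .inr <| .inr <| .inr ⟨m, a, j, hw, haj.symm.imp And.symm And.symm, hm⟩

lemma between_z (u v : V k) : Between u v z := .inl rfl

lemma between_x_of_left {c : Fin k} {j : Fin (2 * k)} (v : V k) (h : (j : ℕ) / 2 = c) :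
    Between (y j) v (x c) :=
  .inr <| .inl ⟨c, j, rfl, .inl rfl, h⟩

lemma between_y_y {i j m : Fin (2 * k)} (him : (i : ℕ) < m) (hmj : (m : ℕ) < j) :
    Between (y i) (y j) (y m) :=
  .inr <| .inr <| .inl ⟨m, i, j, rfl, .inl ⟨rfl, rfl⟩, him, hmj⟩

lemma between_x_y {a : Fin k} {j m : Fin (2 * k)}
    (h : (j : ℕ) + 1 = 2 * a ∧ (m : ℕ) = 2 * a ∨ (j : ℕ) = 2 * a + 2 ∧ (m : ℕ) = 2 * a + 1) :
    Between (x a) (y j) (y m) :=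
  .inr <| .inr <| .inr ⟨m, a, j, rfl, .inl ⟨rfl, rfl⟩, h⟩

def HasCanonicalWalk (u v : V k) : Prop :=
  ∃ p : (Fgraph k).Walk u v, p.length = fdist u v ∧ ∀ w ∈ p.support, w = u ∨ w = v ∨ Between u v w

lemma HasCanonicalWalk.symm {u v : V k} (h : HasCanonicalWalk u v) : HasCanonicalWalk v u := by
  obtain ⟨p, hlen, hsupp⟩ := h
  refine ⟨p.reverse, by rw [SimpleGraph.Walk.length_reverse, hlen, fdist_comm], fun w hw => ?_⟩
  rw [SimpleGraph.Walk.support_reverse, List.mem_reverse] at hw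
  rcases hsupp w hw with h | h | h
  · exact .inr (.inl h)
  · exact .inl h
  · exact .inr (.inr h.symm)

lemma hasCanonicalWalk_of_adj {u v : V k} (h : (Fgraph k).Adj u v) (hd : fdist u v = 1) :
    HasCanonicalWalk u v :=
  ⟨.cons h .nil, by simp [hd], by simp⟩

lemma exists_walk_y_y (i : Fin (2 * k)) (n : ℕ) (j : Fin (2 * k)) (hj : (j : ℕ) = i + n) :
    ∃ p : (Fgraph k).Walk (y i) (y j), p.length = n ∧
      ∀ w ∈ p.support, ∃ m : Fin (2 * k), w = y m ∧ (i : ℕ) ≤ m ∧ (m : ℕ) ≤ j := by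
  induction n generalizing j with
  | zero =>
    obtain rfl : i = j := Fin.ext hj.symm
    exact ⟨.nil, rfl, by simp⟩
  | succ n ih =>
    obtain ⟨p, hlen, hsupp⟩ := ih ⟨i + n, by omega⟩ rfl
    refine ⟨p.concat (by simp; omega), by simp [hlen], fun w hw => ?_⟩
    rw [SimpleGraph.Walk.support_concat, List.mem_append, List.mem_singleton] at hw
    rcases hw with hw | rfl
    · obtain ⟨m, rfl, him, hmj⟩ := hsupp w hw
      exact ⟨m, rfl, him, by simp at hmj; omega⟩
    · exact ⟨j, rfl, by omega, le_rfl⟩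

lemma hasCanonicalWalk_y_y {i j : Fin (2 * k)} (hij : (i : ℕ) ≤ j) :
    HasCanonicalWalk (y i) (y j) := by
  rcases Nat.lt_or_ge (j : ℕ) (i + 4) with hgap | hgap
  · obtain ⟨p, hlen, hsupp⟩ := exists_walk_y_y i (j - i) j (by omega)
    refine ⟨p, by simp [fdist, hlen]; omega, fun w hw => ?_⟩
    obtain ⟨m, rfl, him, hmj⟩ := hsupp w hw
    rcases him.eq_or_lt with him | him
    · exact .inl (congrArg y (Fin.ext him.symm))
    rcases hmj.eq_or_lt with hmj | hmj
    · exact .inr (.inl (congrArg y (Fin.ext hmj)))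
    · exact .inr (.inr (between_y_y him hmj))
  · have hi := i.isLt
    have hj := j.isLt
    let a : Fin k := ⟨i / 2, by omega⟩
    let b : Fin k := ⟨j / 2, by omega⟩
    refine ⟨.cons (v := x a) (by simp [a]) <| .cons (v := z) (by simp) <|
      .cons (v := x b) (by simp) <| .cons (by simp [b]) .nil, by simp [fdist]; omega, ?_⟩
    simp only [SimpleGraph.Walk.support_cons, SimpleGraph.Walk.support_nil, List.mem_cons,
      List.not_mem_nil, or_false]
    rintro w (rfl | rfl | rfl | rfl | rfl)
    · exact .inl rfl
    · exact .inr (.inr (between_x_of_left _ rfl))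
    · exact .inr (.inr (between_z _ _))
    · exact .inr (.inr (between_x_of_left _ rfl).symm)
    · exact .inr (.inl rfl)

lemma hasCanonicalWalk_x_y (a : Fin k) (j : Fin (2 * k)) : HasCanonicalWalk (x a) (y j) := by
  have hj := j.isLt
  by_cases h1 : (j : ℕ) / 2 = a
  · exact hasCanonicalWalk_of_adj (by simpa using h1) (by simp [fdist, xyDist, h1])
  by_cases h2 : (j : ℕ) + 1 = 2 * a ∨ (j : ℕ) = 2 * a + 2
  · obtain ⟨m, hm⟩ : ∃ m : Fin (2 * k), ((j : ℕ) + 1 = 2 * a ∧ (m : ℕ) = 2 * a) ∨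
        ((j : ℕ) = 2 * a + 2 ∧ (m : ℕ) = 2 * a + 1) := by
      rcases h2 with h2 | h2
      · exact ⟨⟨2 * a, by omega⟩, .inl ⟨h2, rfl⟩⟩
      · exact ⟨⟨2 * a + 1, by omega⟩, .inr ⟨h2, rfl⟩⟩
    refine ⟨.cons (v := y m) (by simp; omega) <| .cons (by simp; omega) .nil,
      by simp [fdist, xyDist, h1, h2], ?_⟩
    simp only [SimpleGraph.Walk.support_cons, SimpleGraph.Walk.support_nil, List.mem_cons,
      List.not_mem_nil, or_false]
    rintro w (rfl | rfl | rfl)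
    · exact .inl rfl
    · exact .inr (.inr (between_x_y hm))
    · exact .inr (.inl rfl)
  · let b : Fin k := ⟨j / 2, by omega⟩
    refine ⟨.cons (v := z) (by simp) <| .cons (v := x b) (by simp) <| .cons (by simp [b]) .nil,
      by simp [fdist, xyDist, h1, h2], ?_⟩
    simp only [SimpleGraph.Walk.support_cons, SimpleGraph.Walk.support_nil, List.mem_cons,
      List.not_mem_nil, or_false]
    rintro w (rfl | rfl | rfl | rfl)
    · exact .inl rfl
    · exact .inr (.inr (between_z _ _))
    · exact .inr (.inr (between_x_of_left _ rfl).symm)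
    · exact .inr (.inl rfl)

lemma hasCanonicalWalk_z_y (j : Fin (2 * k)) : HasCanonicalWalk z (y j) := by
  have hj := j.isLt
  let b : Fin k := ⟨j / 2, by omega⟩
  refine ⟨.cons (v := x b) (by simp) <| .cons (by simp [b]) .nil, by simp [fdist], ?_⟩
  simp only [SimpleGraph.Walk.support_cons, SimpleGraph.Walk.support_nil, List.mem_cons,
    List.not_mem_nil, or_false]
  rintro w (rfl | rfl | rfl)
  · exact .inl rfl
  · exact .inr (.inr (between_x_of_left _ rfl).symm)
  · exact .inr (.inl rfl)

lemma hasCanonicalWalk_x_x (a b : Fin k) : HasCanonicalWalk (x a) (x b) := by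
  by_cases hab : a = b
  · subst hab
    exact ⟨.nil, by simp, by simp⟩
  refine ⟨.cons (v := z) (by simp) <| .cons (by simp) .nil, by simp [fdist, hab], ?_⟩
  simp only [SimpleGraph.Walk.support_cons, SimpleGraph.Walk.support_nil, List.mem_cons,
    List.not_mem_nil, or_false]
  rintro w (rfl | rfl | rfl)
  · exact .inl rfl
  · exact .inr (.inr (between_z _ _))
  · exact .inr (.inl rfl)

lemma hasCanonicalWalk (u v : V k) : HasCanonicalWalk u v := by
  rcases u with _ | (a | i) <;> rcases v with _ | (b | j)
  · exact ⟨.nil, by simp, by simp⟩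
  · exact hasCanonicalWalk_of_adj (adj_z_x b) rfl
  · exact hasCanonicalWalk_z_y j
  · exact hasCanonicalWalk_of_adj (adj_x_z a) rfl
  · exact hasCanonicalWalk_x_x a b
  · exact hasCanonicalWalk_x_y a j
  · exact (hasCanonicalWalk_z_y i).symm
  · exact (hasCanonicalWalk_x_y b i).symm
  · rcases le_total (i : ℕ) j with hij | hji
    · exact hasCanonicalWalk_y_y hij
    · exact (hasCanonicalWalk_y_y hji).symm

lemma dist_eq_fdist (u v : V k) : (Fgraph k).dist u v = fdist u v := by
  obtain ⟨p, hlen, -⟩ := hasCanonicalWalk u v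
  obtain ⟨q, hq⟩ := p.reachable.exists_walk_length_eq_dist
  exact le_antisymm (hlen ▸ SimpleGraph.dist_le p) (hq ▸ fdist_le_length q)

variable {X : Set (V k)}

lemma isMVisible_of_forall_between {u v : V k} (h : ∀ w, Between u v w → w ∉ X) :
    IsMVisible (Fgraph k) X u v := by
  obtain ⟨p, hlen, hsupp⟩ := hasCanonicalWalk u v
  refine ⟨p, by rw [hlen, dist_eq_fdist], fun w hw hwX => ?_⟩
  rcases hsupp w hw with h' | h' | h'
  · exact .inl h'
  · exact .inr h'
  · exact absurd hwX (h w h')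

lemma not_isMVisible_of_forced {u v : V k} (huv : 2 ≤ fdist u v)
    (hforced : ∀ w, (Fgraph k).Adj u w → fdist w v + 1 = fdist u v → w ∈ X) :
    ¬ IsMVisible (Fgraph k) X u v := by
  intro h
  obtain ⟨w, hadj, hd, hwX⟩ := h.exists_adj_notMem (by rwa [dist_eq_fdist])
  simp only [dist_eq_fdist] at hd
  exact hwX (hforced w hadj hd)

lemma not_isMVisible_x_x {a b : Fin k} (hab : a ≠ b) (hz : z ∈ X) :
    ¬ IsMVisible (Fgraph k) X (x a) (x b) := by
  refine not_isMVisible_of_forced (by simp [fdist, hab]) fun w hadj hd => ?_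
  rcases w with _ | (c | j)
  · exact hz
  · simp at hadj
  · simp only [adj_x_y_iff] at hadj
    simp only [fdist, xyDist, hab, if_false] at hd
    have := Fin.val_ne_of_ne hab
    split_ifs at hd <;> omega

lemma not_isMVisible_z_y {a : Fin k} {j : Fin (2 * k)} (hj : (j : ℕ) / 2 = a) (ha : x a ∈ X) :
    ¬ IsMVisible (Fgraph k) X z (y j) := by
  refine not_isMVisible_of_forced (by simp [fdist]) fun w hadj hd => ?_
  rcases w with _ | (c | m)
  · simp at hadj
  · simp only [fdist, xyDist] at hd
    obtain rfl : c = a := Fin.ext (by split_ifs at hd <;> omega)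
    exact ha
  · simp at hadj

lemma not_isMVisible_x_y {a : Fin k} {j m : Fin (2 * k)}
    (h : (j : ℕ) + 1 = 2 * a ∧ (m : ℕ) = 2 * a ∨ (j : ℕ) = 2 * a + 2 ∧ (m : ℕ) = 2 * a + 1)
    (hm : y m ∈ X) : ¬ IsMVisible (Fgraph k) X (x a) (y j) := by
  refine not_isMVisible_of_forced (by simp only [fdist, xyDist]; split_ifs <;> omega)
    fun w hadj hd => ?_
  rcases w with _ | (c | m')
  · simp only [fdist, xyDist] at hd
    split_ifs at hd <;> omega
  · simp at hadj
  · simp only [adj_x_y_iff] at hadj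
    simp only [fdist, xyDist] at hd
    obtain rfl : m' = m := Fin.ext (by split_ifs at hd <;> omega)
    exact hm

/-- A shortest walk from `y i` to `y j` starts along the path towards `y j` when
`|i - j| ≤ 4`, or with `x (i / 2)` when `|i - j| ≥ 4`. -/
lemma not_isMVisible_y_y {i j m : Fin (2 * k)}
    (hm : (m : ℕ) = i + 1 ∧ (i : ℕ) + 2 ≤ j ∨ (m : ℕ) + 1 = i ∧ (j : ℕ) + 2 ≤ i)
    (hmX : (i : ℕ) ≤ j + 4 → (j : ℕ) ≤ i + 4 → y m ∈ X)
    (hxX : (i : ℕ) + 4 ≤ j ∨ (j : ℕ) + 4 ≤ i → ∀ c : Fin k, (i : ℕ) / 2 = c → x c ∈ X) :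
    ¬ IsMVisible (Fgraph k) X (y i) (y j) := by
  refine not_isMVisible_of_forced (by simp only [fdist]; omega) fun w hadj hd => ?_
  rcases w with _ | (c | m')
  · simp at hadj
  · simp only [adj_y_x_iff] at hadj
    simp only [fdist, xyDist] at hd
    exact hxX (by split_ifs at hd <;> omega) c hadj
  · simp only [adj_y_y_iff] at hadj
    simp only [fdist] at hd
    obtain rfl : m' = m := Fin.ext (by omega)
    exact hmX (by omega) (by omega)

lemma Between.exists_end_below {u v : V k} {m : Fin (2 * k)} (h : Between u v (y m)) :
    (∃ i : Fin (2 * k), (i : ℕ) < m ∧ (u = y i ∨ v = y i)) ∨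
      ∃ a : Fin k, 2 * (a : ℕ) < m ∧ (u = x a ∨ v = x a) := by
  rcases h with h | ⟨c, j, h, -⟩ | ⟨m', i, j, h, hij, him, -⟩ | ⟨m', a, j, h, haj, hm⟩ <;>
    simp only [Option.some.injEq, reduceCtorEq, Sum.inr.injEq] at h
  · subst h
    exact .inl ⟨i, him, by tauto⟩
  · subst h
    rcases hm with ⟨hj, hm⟩ | ⟨-, hm⟩
    · exact .inl ⟨j, by omega, by tauto⟩
    · exact .inr ⟨a, by omega, by tauto⟩

lemma Between.exists_end_above {u v : V k} {m : Fin (2 * k)} (h : Between u v (y m)) :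
    (∃ j : Fin (2 * k), (m : ℕ) < j ∧ (u = y j ∨ v = y j)) ∨
      ∃ a : Fin k, (m : ℕ) ≤ 2 * a ∧ (u = x a ∨ v = x a) := by
  rcases h with h | ⟨c, j, h, -⟩ | ⟨m', i, j, h, hij, -, hmj⟩ | ⟨m', a, j, h, haj, hm⟩ <;>
    simp only [Option.some.injEq, reduceCtorEq, Sum.inr.injEq] at h
  · subst h
    exact .inl ⟨j, hmj, by tauto⟩
  · subst h
    rcases hm with ⟨-, hm⟩ | ⟨hj, hm⟩
    · exact .inr ⟨a, by omega, by tauto⟩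
    · exact .inl ⟨j, by omega, by tauto⟩

lemma isTotalMVSet_ends (hk : 0 < k) :
    IsTotalMVSet (Fgraph k) {y ⟨0, by omega⟩, y ⟨2 * k - 1, by omega⟩} := by
  intro u v
  refine isMVisible_of_forall_between fun w hw hwX => ?_
  rcases hwX with rfl | rfl
  · rcases hw.exists_end_below with ⟨_, h, -⟩ | ⟨_, h, -⟩ <;> simp at h
  · rcases hw.exists_end_above with ⟨j, hj, -⟩ | ⟨a, ha, -⟩
    · have := j.isLt
      simp at hj; omega
    · have := a.isLt
      simp at ha; omega

lemma subset_ends_of_isTotalMVSet (hk : 2 ≤ k) (hX : IsTotalMVSet (Fgraph k) X) :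
    X ⊆ {y ⟨0, by omega⟩, y ⟨2 * k - 1, by omega⟩} := by
  rintro (_ | (a | m)) hu
  · exact absurd (hX (x ⟨0, by omega⟩) (x ⟨1, by omega⟩))
      (not_isMVisible_x_x (by simp [Fin.ext_iff]) hu)
  · exact absurd (hX z (y ⟨2 * a, by omega⟩)) (not_isMVisible_z_y (by simp) hu)
  · simp only [Set.mem_insert_iff, Set.mem_singleton_iff, y_eq_y_iff]
    by_contra hm
    exact not_isMVisible_y_y (i := ⟨m - 1, by omega⟩) (j := ⟨m + 1, by omega⟩) (m := m)
      (.inl ⟨by simp; omega, by simp; omega⟩) (fun _ _ => hu) (fun h => by simp at h; omega)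
      (hX _ _)

lemma isDualMVSet_x_y_y (hk : 0 < k) :
    IsDualMVSet (Fgraph k) {x ⟨0, hk⟩, y ⟨0, by omega⟩, y ⟨1, by omega⟩} := by
  constructor
  · intro u hu v hv
    simp only [Set.mem_insert_iff, Set.mem_singleton_iff] at hu hv
    rcases hu with rfl | rfl | rfl <;> rcases hv with rfl | rfl | rfl <;>
      first | exact isMVisible_self _ | exact isMVisible_of_adj (by simp)
  · intro u hu v hv
    simp only [Set.mem_insert_iff, Set.mem_singleton_iff, not_or] at hu hv
    refine isMVisible_of_forall_between fun w hw hwX => ?_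
    rcases hwX with rfl | rfl | rfl
    · rcases hw with h | ⟨c, j, hc, hj, hjc⟩ | ⟨_, _, _, h, -⟩ | ⟨_, _, _, h, -⟩ <;> try simp at h
      rw [x_eq_x_iff] at hc
      simp only at hc
      rcases hj with rfl | rfl <;> simp [Fin.ext_iff] at hu hv <;> omega
    · rcases hw.exists_end_below with ⟨_, h, -⟩ | ⟨_, h, -⟩ <;> simp at h
    · rcases hw.exists_end_below with ⟨_, _, h | h⟩ | ⟨_, _, h | h⟩ <;> simp_all [Fin.ext_iff]

lemma z_notMem_of_isDualMVSet (hk : 3 ≤ k) (hX : IsDualMVSet (Fgraph k) X) : z ∉ X := by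
  intro hz
  have hsame (a b : Fin k) (hab : a ≠ b) (hiff : x a ∈ X ↔ x b ∈ X) : False := by
    by_cases ha : x a ∈ X
    · exact not_isMVisible_x_x hab hz (hX.1 _ ha _ (hiff.1 ha))
    · exact not_isMVisible_x_x hab hz (hX.2 _ ha _ (mt hiff.2 ha))
  by_cases h01 : x ⟨0, by omega⟩ ∈ X ↔ x ⟨1, by omega⟩ ∈ X
  · exact hsame _ _ (by simp [Fin.ext_iff]) h01
  by_cases h02 : x ⟨0, by omega⟩ ∈ X ↔ x ⟨2, by omega⟩ ∈ X
  · exact hsame _ _ (by simp [Fin.ext_iff]) h02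
  exact hsame ⟨1, by omega⟩ ⟨2, by omega⟩ (by simp [Fin.ext_iff]) (by tauto)

lemma y_mem_of_x_mem (hX : IsDualMVSet (Fgraph k) X) (hz : z ∉ X) {a : Fin k}
    (ha : x a ∈ X) {j : Fin (2 * k)} (hj : (j : ℕ) / 2 = a) : y j ∈ X := by
  by_contra hy
  exact not_isMVisible_z_y hj ha (hX.2 _ hz _ hy)

lemma y_notMem_of_x_mem (hX : IsDualMVSet (Fgraph k) X) (hz : z ∉ X) {a : Fin k}
    (ha : x a ∈ X) {j : Fin (2 * k)} (hj : (j : ℕ) / 2 ≠ a) : y j ∉ X := by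
  intro hy
  have := a.isLt
  have hxX : ∀ c : Fin k, (c : ℕ) = a → x c ∈ X := fun c hc => by rwa [Fin.ext hc]
  rcases Nat.lt_or_gt_of_ne hj with hj | hj
  · exact not_isMVisible_y_y (i := ⟨2 * a + 1, by omega⟩) (m := ⟨2 * a, by omega⟩)
      (.inr ⟨rfl, by simp; omega⟩) (fun _ _ => y_mem_of_x_mem hX hz ha (by simp))
      (fun _ c hc => hxX c (by simp at hc; omega))
      (hX.1 _ (y_mem_of_x_mem hX hz ha (by simp; omega)) _ hy)
  · exact not_isMVisible_y_y (i := ⟨2 * a, by omega⟩) (m := ⟨2 * a + 1, by omega⟩)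
      (.inl ⟨rfl, by simp; omega⟩) (fun _ _ => y_mem_of_x_mem hX hz ha (by simp; omega))
      (fun _ c hc => hxX c (by simp at hc; omega))
      (hX.1 _ (y_mem_of_x_mem hX hz ha (by simp)) _ hy)

lemma x_eq_of_mem (hX : IsDualMVSet (Fgraph k) X) (hz : z ∉ X) {a b : Fin k}
    (ha : x a ∈ X) (hb : x b ∈ X) : a = b := by
  have := b.isLt
  by_contra hab
  exact y_notMem_of_x_mem hX hz ha (j := ⟨2 * b, by omega⟩) (by simp [Fin.ext_iff] at hab ⊢; omega)
    (y_mem_of_x_mem hX hz hb (by simp))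

lemma subset_of_x_mem (hX : IsDualMVSet (Fgraph k) X) (hz : z ∉ X) {a : Fin k} (ha : x a ∈ X) :
    X ⊆ {x a, y ⟨2 * a, by omega⟩, y ⟨2 * a + 1, by omega⟩} := by
  rintro (_ | (b | j)) hu
  · exact absurd hu hz
  · simp [x_eq_of_mem hX hz hu ha]
  · simp only [Set.mem_insert_iff, Set.mem_singleton_iff, y_eq_y_iff]
    by_contra hj
    exact y_notMem_of_x_mem hX hz ha (j := j) (by omega) hu

lemma y_pred_mem_of_succ_mem (hX : IsDualMVSet (Fgraph k) X) (hx : ∀ a, x a ∉ X)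
    {p m s : Fin (2 * k)} (hp : (p : ℕ) + 1 = m) (hs : (s : ℕ) = m + 1)
    (hm : y m ∈ X) (hsX : y s ∈ X) : y p ∈ X := by
  by_contra hpX
  have := s.isLt
  by_cases hlast : (s : ℕ) + 1 = 2 * k
  · exact not_isMVisible_x_y (a := ⟨k - 1, by omega⟩) (.inl ⟨by simp; omega, by simp; omega⟩) hm
      (hX.2 _ (hx _) _ hpX)
  obtain ⟨t, ht⟩ : ∃ t : Fin (2 * k), (t : ℕ) = m + 2 := ⟨⟨m + 2, by omega⟩, rfl⟩
  by_cases htX : y t ∈ X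
  · exact not_isMVisible_y_y (i := m) (j := t) (m := s) (.inl ⟨hs, by omega⟩) (fun _ _ => hsX)
      (fun _ => by omega) (hX.1 _ hm _ htX)
  · exact not_isMVisible_y_y (i := p) (j := t) (m := m) (.inl ⟨hp.symm, by omega⟩)
      (fun _ _ => hm) (fun _ => by omega) (hX.2 _ hpX _ htX)

lemma y_succ_mem_of_pred_mem (hX : IsDualMVSet (Fgraph k) X) (hx : ∀ a, x a ∉ X)
    {p m s : Fin (2 * k)} (hp : (p : ℕ) + 1 = m) (hs : (s : ℕ) = m + 1)
    (hm : y m ∈ X) (hpX : y p ∈ X) : y s ∈ X := by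
  by_contra hsX
  by_cases hfirst : (p : ℕ) = 0
  · exact not_isMVisible_x_y (a := ⟨0, by omega⟩) (.inr ⟨by simp; omega, by simp; omega⟩) hm
      (hX.2 _ (hx _) _ hsX)
  obtain ⟨t, ht⟩ : ∃ t : Fin (2 * k), (t : ℕ) + 2 = m := ⟨⟨m - 2, by omega⟩, by simp; omega⟩
  by_cases htX : y t ∈ X
  · exact not_isMVisible_y_y (i := t) (j := m) (m := p) (.inl ⟨by omega, by omega⟩)
      (fun _ _ => hpX) (fun _ => by omega) (hX.1 _ htX _ hm)
  · exact not_isMVisible_y_y (i := s) (j := t) (m := m) (.inr ⟨hs.symm, by omega⟩)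
      (fun _ _ => hm) (fun _ => by omega) (hX.2 _ hsX _ htX)

lemma subset_ends_of_forall_x_notMem (hk : 0 < k) (hX : IsDualMVSet (Fgraph k) X)
    (hz : z ∉ X) (hx : ∀ a, x a ∉ X) : X ⊆ {y ⟨0, by omega⟩, y ⟨2 * k - 1, by omega⟩} := by
  rintro (_ | (a | m)) hm
  · exact absurd hm hz
  · exact absurd hm (hx a)
  simp only [Set.mem_insert_iff, Set.mem_singleton_iff, y_eq_y_iff]
  by_contra hend
  obtain ⟨p, hp⟩ : ∃ p : Fin (2 * k), (p : ℕ) + 1 = m := ⟨⟨m - 1, by omega⟩, by simp; omega⟩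
  obtain ⟨s, hs⟩ : ∃ s : Fin (2 * k), (s : ℕ) = m + 1 := ⟨⟨m + 1, by omega⟩, rfl⟩
  have hgap : IsMVisible (Fgraph k) X (y p) (y s) → False :=
    not_isMVisible_y_y (m := m) (.inl ⟨hp.symm, by omega⟩) (fun _ _ => hm) (fun _ => by omega)
  by_cases hpX : y p ∈ X
  · exact hgap (hX.1 _ hpX _ (y_succ_mem_of_pred_mem hX hx hp hs hm hpX))
  · exact hgap (hX.2 _ hpX _ (mt (y_pred_mem_of_succ_mem hX hx hp hs hm) hpX))

lemma ncard_le_three_of_isDualMVSet (hk : 3 ≤ k) (hX : IsDualMVSet (Fgraph k) X) : X.ncard ≤ 3 := by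
  have hz := z_notMem_of_isDualMVSet hk hX
  have hsub : ∃ a b c : V k, X ⊆ {a, b, c} := by
    by_cases hx : ∃ a, x a ∈ X
    · obtain ⟨a, ha⟩ := hx
      exact ⟨_, _, _, subset_of_x_mem hX hz ha⟩
    · exact ⟨_, _, _, (subset_ends_of_forall_x_notMem (by omega) hX hz (not_exists.1 hx)).trans
        (Set.subset_insert (y ⟨0, by omega⟩) _)⟩
  obtain ⟨a, b, c, hsub⟩ := hsub
  calc X.ncard ≤ ({a, b, c} : Set (V k)).ncard := Set.ncard_le_ncard hsub (Set.toFinite _)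
    _ ≤ 3 := by
      rw [← Finset.coe_pair, ← Finset.coe_insert, Set.ncard_coe_finset]
      exact Finset.card_le_three

lemma muT_eq_two (hk : 2 ≤ k) : muT (Fgraph k) = 2 := by
  have hends : (y ⟨0, by omega⟩ : V k) ≠ y ⟨2 * k - 1, by omega⟩ := by
    rw [Ne, y_eq_y_iff]; simp; omega
  refine IsGreatest.csSup_eq ⟨⟨_, isTotalMVSet_ends (by omega), Set.ncard_pair hends⟩, ?_⟩
  rintro n ⟨X, hX, rfl⟩
  exact (Set.ncard_le_ncard (subset_ends_of_isTotalMVSet hk hX) (Set.toFinite _)).trans_eq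
    (Set.ncard_pair hends)

lemma muD_eq_three (hk : 3 ≤ k) : muD (Fgraph k) = 3 := by
  refine IsGreatest.csSup_eq ⟨⟨_, isDualMVSet_x_y_y (by omega), ?_⟩, ?_⟩
  · exact Set.ncard_eq_three.2 ⟨_, _, _, by simp, by simp, by simp [Fin.ext_iff], rfl⟩
  · rintro n ⟨X, hX, rfl⟩
    exact ncard_le_three_of_isDualMVSet hk hX

end Fgraph

theorem stmt_18 (k : ℕ) (hk : 5 ≤ k) :
    muT (Fgraph k) = 2 ∧ muD (Fgraph k) = 3 :=
  ⟨Fgraph.muT_eq_two (by omega), Fgraph.muD_eq_three (by omega)⟩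
end
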